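/- Let f be a PC² function on an open set Ω ⊆ ℝⁿ, with C² pieces f₁, …, f_I. Then f is twice directionally differentiable on Ω: for every x ∈ Ω and every d ∈ ℝⁿ, the directional derivatives f'(x;d) and f⁽²⁾(x;d) exist, and f⁽²⁾(x;d) = dᵀ∇²f_i(x)d for every index i in the directionally active set A'(x;d). -/

import Mathlib

open Filter Topology Set

noncomputable section

/-- One-sided directional derivative: `f'(x;v) = d`. -/
def HasDirDeriv {n : ℕ} (f : (Fin n → ℝ) → ℝ) (x v : Fin n → ℝ) (d : ℝ) : Prop :=
  Tendsto (fun τ : ℝ => (f (x + τ • v) - f x) / τ) (𝓝[>] 0) (𝓝 d)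

/-- Second-order directional derivative: `f'(x;v) = d₁` and `f⁽²⁾(x;v) = d₂`. -/
def HasDirDeriv2 {n : ℕ} (f : (Fin n → ℝ) → ℝ) (x v : Fin n → ℝ) (d₁ d₂ : ℝ) : Prop :=
  HasDirDeriv f x v d₁ ∧
  Tendsto (fun τ : ℝ => 2 * (f (x + τ • v) - f x - τ * d₁) / τ ^ 2) (𝓝[>] 0) (𝓝 d₂)

/-!
Along the ray `τ ↦ x + τ • d`, every small `τ > 0` has `f = fᵢ` for some `i`, and we may restrict
to the indices active along the ray. A difference quotient of `f`, continuous for `τ > 0`, then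
agrees at each small `τ` with the corresponding quotient of some active piece, and these converge
to finitely many limits. If the quotient of `f` did not converge to the limit `bᵢ` of an active
piece, it would exceed (say) a value `v > bᵢ` outside that finite set of limits infinitely often,
while also coming close to `bᵢ` infinitely often; by the intermediate value theorem it would then
equal `v` at points arbitrarily close to `0`, which the pieces' quotients eventually avoid.
Applying this to the first-order and then the second-order quotients gives the theorem.
-/

theorem Filter.Eventually.exists_and_frequently {α ι : Type*} [Finite ι] {l : Filter α}
    {p : ι → α → Prop} (h : ∀ᶠ x in l, ∃ i, p i x) :
    ∀ᶠ x in l, ∃ i, (∃ᶠ y in l, p i y) ∧ p i x := by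
  have hrare : ∀ᶠ x in l, ∀ i, p i x → ∃ᶠ y in l, p i y := by
    refine eventually_all.2 fun i => ?_
    by_cases hi : ∃ᶠ y in l, p i y
    · exact Eventually.of_forall fun _ _ => hi
    · exact (not_frequently.1 hi).mono fun _ hx hpx => absurd hpx hx
  filter_upwards [h, hrare] with x ⟨i, hi⟩ hx using ⟨i, hx i hi, hi⟩

theorem eventually_lt_or_eventually_gt_of_eventually_ne {φ : ℝ → ℝ} {a v : ℝ}
    (hφ : ∀ᶠ τ in 𝓝[>] a, ContinuousAt φ τ) (hv : ∀ᶠ τ in 𝓝[>] a, φ τ ≠ v) :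
    (∀ᶠ τ in 𝓝[>] a, φ τ < v) ∨ ∀ᶠ τ in 𝓝[>] a, v < φ τ := by
  obtain ⟨b, hab, hsub⟩ := mem_nhdsGT_iff_exists_Ioo_subset.1 (hφ.and hv)
  have hIoo : Ioo a b ∈ 𝓝[>] a := Ioo_mem_nhdsGT hab
  by_cases hlt : ∀ t ∈ Ioo a b, φ t < v
  · exact Or.inl (by filter_upwards [hIoo] using hlt)
  push Not at hlt
  obtain ⟨s, hs, hvs⟩ := hlt
  refine Or.inr ?_
  filter_upwards [hIoo] with t ht
  by_contra! hts
  have hcont : ContinuousOn φ (Ioo a b) := fun τ hτ => (hsub hτ).1.continuousWithinAt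
  obtain ⟨r, hr, hrv⟩ := isPreconnected_Ioo.intermediate_value ht hs hcont ⟨hts, hvs⟩
  exact (hsub hr).2 hrv

theorem tendsto_of_frequently_eq_of_eventually_exists_eq {ι : Type*} [Finite ι] {φ : ℝ → ℝ}
    {ψ : ι → ℝ → ℝ} {b : ι → ℝ} {a : ℝ} (hφ : ∀ᶠ τ in 𝓝[>] a, ContinuousAt φ τ)
    (hψ : ∀ i, Tendsto (ψ i) (𝓝[>] a) (𝓝 (b i))) (hsel : ∀ᶠ τ in 𝓝[>] a, ∃ i, φ τ = ψ i τ)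
    {i : ι} (hi : ∃ᶠ τ in 𝓝[>] a, φ τ = ψ i τ) : Tendsto φ (𝓝[>] a) (𝓝 (b i)) := by
  have hne : ∀ v ∉ range b, ∀ᶠ τ in 𝓝[>] a, φ τ ≠ v := fun v hv => by
    filter_upwards [hsel, eventually_all.2 fun j => (hψ j).eventually_ne fun h => hv ⟨j, h⟩]
      with τ ⟨j, hj⟩ hτ
    exact hj ▸ hτ j
  have havoid : ∀ u w, u < w → ∃ v ∈ Ioo u w, v ∉ range b := fun u w huw =>
    ((Ioo_infinite huw).sdiff (finite_range b)).nonempty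
  rw [tendsto_order]
  refine ⟨fun u hu => ?_, fun w hw => ?_⟩
  · obtain ⟨v, ⟨huv, hvb⟩, hv⟩ := havoid u (b i) hu
    have hfreq : ∃ᶠ τ in 𝓝[>] a, v < φ τ :=
      (hi.and_eventually ((hψ i).eventually (lt_mem_nhds hvb))).mono fun τ h => h.1 ▸ h.2
    have hgt := (eventually_lt_or_eventually_gt_of_eventually_ne hφ (hne v hv)).resolve_left
      fun hlt => hfreq (hlt.mono fun τ h => lt_asymm h)
    exact hgt.mono fun τ h => huv.trans h
  · obtain ⟨v, ⟨hbv, hvw⟩, hv⟩ := havoid (b i) w hw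
    have hfreq : ∃ᶠ τ in 𝓝[>] a, φ τ < v :=
      (hi.and_eventually ((hψ i).eventually (gt_mem_nhds hbv))).mono fun τ h => h.1 ▸ h.2
    have hlt := (eventually_lt_or_eventually_gt_of_eventually_ne hφ (hne v hv)).resolve_right
      fun hgt => hfreq (hgt.mono fun τ h => lt_asymm h)
    exact hlt.mono fun τ h => h.trans hvw

theorem tendsto_two_mul_sub_div_sq_of_hasDerivAt {G G' : ℝ → ℝ} {C : ℝ}
    (hG : ∀ᶠ t in 𝓝 0, HasDerivAt G (G' t) t) (hG' : HasDerivAt G' C 0) :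
    Tendsto (fun τ => 2 * (G τ - G 0 - τ * G' 0) / τ ^ 2) (𝓝[≠] 0) (𝓝 C) := by
  obtain ⟨δ, hδ, hball⟩ := Metric.eventually_nhds_iff_ball.1 hG
  have hnhds : 𝓝[Metric.ball 0 δ] (0 : ℝ) = 𝓝 0 :=
    Metric.isOpen_ball.nhdsWithin_eq (Metric.mem_ball_self hδ)
  set R : ℝ → ℝ := fun τ => G τ - τ * G' 0 - C / 2 * τ ^ 2
  have hR : ∀ t ∈ Metric.ball (0 : ℝ) δ,
      HasDerivWithinAt R (G' t - G' 0 - C * t) (Metric.ball 0 δ) t := by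
    intro t ht
    have := ((hball t ht).fun_sub ((hasDerivAt_id' t).mul_const (G' 0))).fun_sub
      ((hasDerivAt_pow 2 t).const_mul (C / 2))
    exact (this.congr_deriv (by ring)).hasDerivWithinAt
  have hR' : (fun t => G' t - G' 0 - C * t) =o[𝓝[Metric.ball 0 δ] 0] fun t => (t - 0) ^ 1 := by
    rw [hnhds]
    simpa [mul_comm] using hasDerivAt_iff_isLittleO.1 hG'
  have ho := (convex_ball (0 : ℝ) δ).isLittleO_pow_succ_real (Metric.mem_ball_self hδ) hR hR'
  rw [hnhds] at ho
  have hlim : Tendsto (fun τ => C + 2 * ((R τ - R 0) / τ ^ 2)) (𝓝[≠] 0) (𝓝 C) := by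
    simpa using ((ho.mono nhdsWithin_le_nhds).tendsto_div_nhds_zero.const_mul 2).const_add C
  refine hlim.congr' ?_
  filter_upwards [self_mem_nhdsWithin] with τ (hτ : τ ≠ 0)
  simp only [R]
  field_simp
  ring

theorem ContDiffAt.hasDirDeriv2 {n : ℕ} {F : (Fin n → ℝ) → ℝ} {x : Fin n → ℝ}
    (hF : ContDiffAt ℝ 2 F x) (d : Fin n → ℝ) :
    HasDirDeriv2 F x d (fderiv ℝ F x d) (iteratedFDeriv ℝ 2 F x ![d, d]) := by
  have hray : ∀ τ : ℝ, HasDerivAt (fun t : ℝ => x + t • d) d τ := fun τ => by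
    simpa using ((hasDerivAt_id τ).smul_const d).const_add x
  have hG : ∀ᶠ t in 𝓝 (0 : ℝ),
      HasDerivAt (fun t : ℝ => F (x + t • d)) (fderiv ℝ F (x + t • d) d) t := by
    have hline : Tendsto (fun t : ℝ => x + t • d) (𝓝 0) (𝓝 x) := by
      simpa using (hray 0).continuousAt.tendsto
    filter_upwards [hline.eventually ((hF.eventually (by simp)).mono fun y hy =>
      hy.differentiableAt (by simp))] with t ht
    exact ht.hasFDerivAt.comp_hasDerivAt t (hray t)
  have hG' :
      HasDerivAt (fun t : ℝ => fderiv ℝ F (x + t • d) d) (fderiv ℝ (fderiv ℝ F) x d d) 0 := by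
    have hdf : HasFDerivAt (fderiv ℝ F) (fderiv ℝ (fderiv ℝ F) x) (x + (0 : ℝ) • d) := by
      simpa using ((hF.fderiv_right (m := 1) (by norm_num)).differentiableAt
        (by norm_num)).hasFDerivAt
    have hcomp : HasDerivAt (fun t : ℝ => fderiv ℝ F (x + t • d)) (fderiv ℝ (fderiv ℝ F) x d) 0 :=
      hdf.comp_hasDerivAt (0 : ℝ) (hray 0)
    simpa using hcomp.clm_apply (hasDerivAt_const (0 : ℝ) d)
  rw [iteratedFDeriv_two_apply]
  refine ⟨?_, ?_⟩
  · simpa [HasDirDeriv, div_eq_inv_mul] using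
      ((hF.differentiableAt (by simp)).hasFDerivAt.hasLineDerivAt d).tendsto_slope_zero_right
  · simpa using (tendsto_two_mul_sub_div_sq_of_hasDerivAt hG hG').mono_left (nhdsGT_le_nhdsNE 0)

theorem HasDirDeriv2.unique {n : ℕ} {f : (Fin n → ℝ) → ℝ} {x v : Fin n → ℝ} {a₁ a₂ b₁ b₂ : ℝ}
    (ha : HasDirDeriv2 f x v a₁ a₂) (hb : HasDirDeriv2 f x v b₁ b₂) : a₁ = b₁ ∧ a₂ = b₂ := by
  obtain rfl : a₁ = b₁ := tendsto_nhds_unique ha.1 hb.1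
  exact ⟨rfl, tendsto_nhds_unique ha.2 hb.2⟩

theorem HasDirDeriv2.of_eventually_exists_eq {n : ℕ} {ι : Type*} [Finite ι]
    {f : (Fin n → ℝ) → ℝ} {fs : ι → (Fin n → ℝ) → ℝ} {x d : Fin n → ℝ} {D₁ D₂ : ι → ℝ}
    (hf : ∀ᶠ τ in 𝓝[>] (0 : ℝ), ContinuousAt (fun t : ℝ => f (x + t • d)) τ)
    (hsel : ∀ᶠ τ in 𝓝[>] (0 : ℝ), ∃ i, f (x + τ • d) = fs i (x + τ • d))
    (hact : ∀ i, ∃ᶠ τ in 𝓝[>] (0 : ℝ), f (x + τ • d) = fs i (x + τ • d))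
    (hval : ∀ i, fs i x = f x) (hfs : ∀ i, HasDirDeriv2 (fs i) x d (D₁ i) (D₂ i)) (i : ι) :
    HasDirDeriv2 f x d (D₁ i) (D₂ i) := by
  have hquot : ∀ (Φ : ℝ → ℝ → ℝ) (b : ι → ℝ),
      (∀ᶠ τ in 𝓝[>] (0 : ℝ), ContinuousAt (fun t => Φ t (f (x + t • d))) τ) →
      (∀ j, Tendsto (fun t => Φ t (fs j (x + t • d))) (𝓝[>] 0) (𝓝 (b j))) →
      ∀ j, Tendsto (fun t => Φ t (f (x + t • d))) (𝓝[>] 0) (𝓝 (b j)) := fun Φ b hΦ hb j =>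
    tendsto_of_frequently_eq_of_eventually_exists_eq hΦ hb
      (hsel.mono fun τ ⟨k, hk⟩ => ⟨k, by rw [hk]⟩) ((hact j).mono fun τ h => by rw [h])
  have hpos : ∀ᶠ τ in 𝓝[>] (0 : ℝ), ContinuousAt (fun t : ℝ => f (x + t • d)) τ ∧ τ ≠ 0 :=
    hf.and (eventually_mem_nhdsWithin.mono fun τ hτ => ne_of_gt hτ)
  have h₁ : ∀ j, HasDirDeriv f x d (D₁ j) :=
    hquot (fun t y => (y - f x) / t) D₁
      (hpos.mono fun τ ⟨hτ, hτ0⟩ => (hτ.sub continuousAt_const).div continuousAt_id hτ0)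
      fun j => by simpa [HasDirDeriv, hval j] using (hfs j).1
  refine ⟨h₁ i, hquot (fun t y => 2 * (y - f x - t * D₁ i) / t ^ 2) D₂
    (hpos.mono fun τ ⟨hτ, hτ0⟩ => (continuousAt_const.mul ((hτ.sub continuousAt_const).sub
      (continuousAt_id.mul continuousAt_const))).div (continuousAt_id.pow 2) (pow_ne_zero 2 hτ0))
    (fun j => ?_) i⟩
  have := (hfs j).2
  rwa [hval j, tendsto_nhds_unique (h₁ j) (h₁ i)] at this

/-- A PC² function on an open set `Ω` is twice directionally
differentiable on `Ω`, and `f⁽²⁾(x;d) = dᵀ∇²fᵢ(x)d` for every index `i` in the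
directionally active set `A'(x;d)`. -/
theorem stmt7 {n I : ℕ} (Ω : Set (Fin n → ℝ)) (hΩ : IsOpen Ω)
    (f : (Fin n → ℝ) → ℝ) (hf : ContinuousOn f Ω)
    (fs : Fin I → (Fin n → ℝ) → ℝ) (hfs : ∀ i, ContDiffOn ℝ 2 (fs i) Ω)
    (hsel : ∀ x ∈ Ω, ∃ i, f x = fs i x) :
    ∀ x ∈ Ω, ∀ d : Fin n → ℝ, ∃ d₁ d₂ : ℝ, HasDirDeriv2 f x d d₁ d₂ ∧
      ∀ i : Fin I,
        (∃ τ : ℕ → ℝ, (∀ k, 0 < τ k) ∧ Tendsto τ atTop (𝓝 (0:ℝ)) ∧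
          ∀ k, f (x + τ k • d) = fs i (x + τ k • d)) →
        d₂ = iteratedFDerivWithin ℝ 2 (fs i) Ω x ![d, d] := by
  intro x hx d
  have hline : Tendsto (fun τ : ℝ => x + τ • d) (𝓝 0) (𝓝 x) :=
    Continuous.tendsto' (by fun_prop) 0 x (by simp)
  have hray : ∀ᶠ τ in 𝓝[>] (0 : ℝ), x + τ • d ∈ Ω :=
    (hline.eventually (hΩ.mem_nhds hx)).filter_mono nhdsWithin_le_nhds
  set act : Fin I → Prop := fun i => ∃ᶠ τ in 𝓝[>] (0 : ℝ), f (x + τ • d) = fs i (x + τ • d)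
  have hsel' : ∀ᶠ τ in 𝓝[>] (0 : ℝ), ∃ i : {i // act i}, f (x + τ • d) = fs i (x + τ • d) :=
    (hray.mono fun τ hτ => hsel _ hτ).exists_and_frequently.mono
      fun τ ⟨i, hi, h⟩ => ⟨⟨i, hi⟩, h⟩
  have hval : ∀ i : {i // act i}, fs i x = f x := fun i =>
    tendsto_nhds_unique_of_frequently_eq
      (((hfs i).continuousOn.continuousAt (hΩ.mem_nhds hx)).tendsto.comp hline |>.mono_left
        nhdsWithin_le_nhds)
      ((hf.continuousAt (hΩ.mem_nhds hx)).tendsto.comp hline |>.mono_left nhdsWithin_le_nhds)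
      (i.2.mono fun τ h => h.symm)
  have hdiff := HasDirDeriv2.of_eventually_exists_eq (fs := fun i : {i // act i} => fs i)
    (hray.mono fun τ hτ => (hf.continuousAt (hΩ.mem_nhds hτ)).comp
      (f := fun t : ℝ => x + t • d) (by fun_prop))
    hsel' (fun i => i.2) hval fun i => ((hfs i).contDiffAt (hΩ.mem_nhds hx)).hasDirDeriv2 d
  obtain ⟨i₀⟩ : Nonempty {i // act i} := hsel'.exists.elim fun _ ⟨i, _⟩ => ⟨i⟩
  refine ⟨_, _, hdiff i₀, fun i ⟨τ, hτpos, hτ, hfτ⟩ => ?_⟩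
  have hi : act i := (tendsto_nhdsWithin_of_tendsto_nhds_of_eventually_within τ hτ
    (.of_forall hτpos)).frequently (.of_forall hfτ)
  rw [iteratedFDerivWithin_of_isOpen 2 hΩ hx]
  exact ((hdiff i₀).unique (hdiff ⟨i, hi⟩)).2
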